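/- arXiv:2404.03759 — 2 statements merged into one kernel-verified Lean document; each statement's English description precedes it below -/
import Mathlib

section
/- If f: 2^N → ℝ is monotone nondecreasing and submodular and λ > 0, then the set function S ↦ -exp(-f(S)/λ) is submodular. -/
theorem stmt2 {α : Type*} [DecidableEq α] [Fintype α]
    (f : Finset α → ℝ) (lam : ℝ) (hlam : 0 < lam)
    (hmono : ∀ S T : Finset α, S ⊆ T → f S ≤ f T)
    (hsub : ∀ S T : Finset α, ∀ e : α, S ⊆ T → e ∉ T →
      f (insert e T) - f T ≤ f (insert e S) - f S) :
    ∀ S T : Finset α, ∀ e : α, S ⊆ T → e ∉ T →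
      (-Real.exp (-(f (insert e T)) / lam)) - (-Real.exp (-(f T) / lam)) ≤
      (-Real.exp (-(f (insert e S)) / lam)) - (-Real.exp (-(f S) / lam)) := by
  intro S T e hST heT
  set a := f S
  set b := f (insert e S)
  set c := f T
  set d := f (insert e T)
  have hac : a ≤ c := hmono S T hST
  have hcd : c ≤ d := hmono T (insert e T) (Finset.subset_insert e T)
  have hsub' : d - c ≤ b - a := hsub S T e hST heT
  -- goal: exp(-c/λ) - exp(-d/λ) ≤ exp(-a/λ) - exp(-b/λ)
  have key : ∀ x y : ℝ, Real.exp (-y / lam) =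
      Real.exp (-x / lam) * Real.exp (-(y - x) / lam) := by
    intro x y
    rw [← Real.exp_add]
    ring_nf
  rw [key c d, key a b]
  have e1 : Real.exp (-(d - c) / lam) ≤ 1 := by
    apply Real.exp_le_one_iff.mpr
    apply div_nonpos_of_nonpos_of_nonneg <;> linarith
  have e2 : Real.exp (-(b - a) / lam) ≤ Real.exp (-(d - c) / lam) := by
    apply Real.exp_le_exp.mpr
    gcongr
  have e3 : Real.exp (-c / lam) ≤ Real.exp (-a / lam) := by
    apply Real.exp_le_exp.mpr
    gcongr
  have p1 : (0:ℝ) < Real.exp (-c / lam) := Real.exp_pos _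
  nlinarith [Real.exp_pos (-a / lam), Real.exp_pos (-(b-a)/lam)]
end

section
/- Let f_1,...,f_n: 2^N → ℝ be monotone nondecreasing weak-submodular functions (each with finite weak-submodularity constant), Q ∈ Δ_n with Σ Q_i = 1, λ > 0, and G(S) = -λ log(Σ_i Q_i exp(-f_i(S)/λ)). Then for every S ⊂ N and e ∉ S such that some f_j with Q_j > 0 has Δ_{f_j}(e|S') > 0 for some S', the marginal Δ_G(e|S) > 0 whenever Δ_{f_j}(e|S) > 0 for some j with Q_j > 0; consequently G has finite weak-submodularity constant. -/
theorem stmt14_aux {ι : Type*} [Fintype ι] (a b : ι → ℝ)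
    (hb : ∀ p, 0 ≤ b p) (h0 : ∀ p, b p = 0 → a p ≤ 0) :
    ∃ w : ℝ, ∀ p, a p ≤ w * b p := by
  refine ⟨∑ p, max (a p / b p) 0, fun p => ?_⟩
  rcases (hb p).lt_or_eq with hp | hp
  · have h2 : max (a p / b p) 0 ≤ ∑ q, max (a q / b q) 0 :=
      Finset.single_le_sum (f := fun q => max (a q / b q) 0)
        (fun q _ => le_max_right _ _) (Finset.mem_univ p)
    have h1 : a p / b p ≤ ∑ q, max (a q / b q) 0 := le_trans (le_max_left _ _) h2
    exact (div_le_iff₀ hp).mp h1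
  · rw [← hp, mul_zero]; exact h0 p hp.symm

set_option maxHeartbeats 2000000 in
theorem stmt14 {α : Type*} [DecidableEq α] [Fintype α] {n : ℕ}
    (f : Fin n → Finset α → ℝ) (Q : Fin n → ℝ) (lam : ℝ)
    (hlam : 0 < lam) (hQ : ∀ i, 0 ≤ Q i) (hQsum : ∑ i, Q i = 1)
    (hmono : ∀ i, ∀ S T : Finset α, S ⊆ T → f i S ≤ f i T)
    (hweak : ∀ i, ∃ w : ℝ, ∀ S T : Finset α, ∀ e : α, S ⊆ T → e ∉ T →
      f i (insert e T) - f i T ≤ w * (f i (insert e S) - f i S)) :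
    (∀ S : Finset α, ∀ e : α, e ∉ S →
      (∃ j, 0 < Q j ∧ 0 < f j (insert e S) - f j S) →
      0 < (-lam * Real.log (∑ i, Q i * Real.exp (-(f i (insert e S)) / lam))) -
            (-lam * Real.log (∑ i, Q i * Real.exp (-(f i S) / lam)))) ∧
    (∃ w : ℝ, ∀ S T : Finset α, ∀ e : α, S ⊆ T → e ∉ T →
      (-lam * Real.log (∑ i, Q i * Real.exp (-(f i (insert e T)) / lam))) -
          (-lam * Real.log (∑ i, Q i * Real.exp (-(f i T) / lam))) ≤
        w * ((-lam * Real.log (∑ i, Q i * Real.exp (-(f i (insert e S)) / lam))) -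
          (-lam * Real.log (∑ i, Q i * Real.exp (-(f i S) / lam))))) := by
  obtain ⟨j0, hj0⟩ : ∃ j, 0 < Q j := by
    by_contra h
    push_neg at h
    have h0 : ∑ i, Q i = 0 :=
      Finset.sum_eq_zero fun i _ => le_antisymm (h i) (hQ i)
    rw [h0] at hQsum; norm_num at hQsum
  set P : Finset α → ℝ := fun S => ∑ i, Q i * Real.exp (-(f i S) / lam) with hPdef
  have hPpos : ∀ S, 0 < P S := fun S =>
    Finset.sum_pos' (fun i _ => mul_nonneg (hQ i) (Real.exp_pos _).le)
      ⟨j0, Finset.mem_univ _, mul_pos hj0 (Real.exp_pos _)⟩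
  set G : Finset α → ℝ := fun S => -lam * Real.log (P S) with hGdef
  have hPanti : ∀ S T : Finset α, (∀ i, f i S ≤ f i T) → P T ≤ P S := by
    intro S T h
    apply Finset.sum_le_sum
    intro i _
    exact mul_le_mul_of_nonneg_left
      (Real.exp_le_exp.mpr ((div_le_div_iff_of_pos_right hlam).mpr (neg_le_neg (h i)))) (hQ i)
  have hGmono : ∀ S T : Finset α, (∀ i, f i S ≤ f i T) → G S ≤ G T := by
    intro S T h
    have := Real.log_le_log (hPpos T) (hPanti S T h)
    simpa [hGdef] using mul_le_mul_of_nonpos_left this (by linarith : -lam ≤ 0)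
  have hstrict : ∀ S : Finset α, ∀ e : α, e ∉ S →
      (∃ j, 0 < Q j ∧ 0 < f j (insert e S) - f j S) → 0 < G (insert e S) - G S := by
    intro S e he ⟨j, hQj, hfj⟩
    have hlt : P (insert e S) < P S := by
      apply Finset.sum_lt_sum
      · intro i _
        exact mul_le_mul_of_nonneg_left
          (Real.exp_le_exp.mpr ((div_le_div_iff_of_pos_right hlam).mpr
            (neg_le_neg (hmono i S (insert e S) (Finset.subset_insert e S))))) (hQ i)
      · refine ⟨j, Finset.mem_univ _, ?_⟩
        exact mul_lt_mul_of_pos_left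
          (Real.exp_lt_exp.mpr ((div_lt_div_iff_of_pos_right hlam).mpr (by linarith))) hQj
    have hlog := Real.log_lt_log (hPpos (insert e S)) hlt
    have := mul_lt_mul_of_neg_left hlog (by linarith : -lam < 0)
    simp only [hGdef]
    linarith
  have hzero : ∀ S : Finset α, ∀ e : α, e ∉ S → ¬(0 < G (insert e S) - G S) →
      ∀ i, 0 < Q i → f i (insert e S) = f i S := by
    intro S e he h i hQi
    by_contra hne
    exact h (hstrict S e he ⟨i, hQi, sub_pos.mpr
      (lt_of_le_of_ne (hmono i S (insert e S) (Finset.subset_insert e S))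
        (fun hh => hne hh.symm))⟩)
  refine ⟨fun S e he hj => hstrict S e he hj, ?_⟩
  choose w hw using hweak
  have key : ∀ p : Finset α × Finset α × α, p.1 ⊆ p.2.1 → p.2.2 ∉ p.2.1 →
      (G (insert p.2.2 p.1) - G p.1 = 0 → G (insert p.2.2 p.2.1) - G p.2.1 ≤ 0) := by
    rintro ⟨S, T, e⟩ hST heT
    intro ha'
    have heS : e ∉ S := fun h => heT (hST h)
    have hfS : ∀ i, 0 < Q i → f i (insert e S) = f i S :=
      hzero S e heS (by rw [ha']; exact lt_irrefl 0)
    have hfT : ∀ i, 0 < Q i → f i (insert e T) = f i T := by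
      intro i hQi
      have h1 := hw i S T e hST heT
      rw [hfS i hQi] at h1
      simp at h1
      exact le_antisymm (by linarith) (hmono i T (insert e T) (Finset.subset_insert e T))
    have hPT : P (insert e T) = P T := by
      apply Finset.sum_congr rfl
      intro i _
      rcases (hQ i).lt_or_eq with hQI | hQI
      · rw [hfT i hQI]
      · rw [← hQI]; ring
    have hb : G (insert e T) - G T = 0 := by simp [hGdef, hPT]
    exact le_of_eq hb
  classical
  obtain ⟨W, hWle⟩ := stmt14_aux
    (a := fun p : Finset α × Finset α × α =>
      if p.1 ⊆ p.2.1 ∧ p.2.2 ∉ p.2.1 then G (insert p.2.2 p.2.1) - G p.2.1 else 0)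
    (b := fun p : Finset α × Finset α × α =>
      if p.1 ⊆ p.2.1 ∧ p.2.2 ∉ p.2.1 then G (insert p.2.2 p.1) - G p.1 else 0)
    (by
      rintro ⟨S, T, e⟩
      dsimp only
      split_ifs with h
      · exact sub_nonneg.mpr (hGmono S (insert e S)
          (fun i => hmono i S (insert e S) (Finset.subset_insert e S)))
      · exact le_refl 0)
    (by
      rintro ⟨S, T, e⟩
      dsimp only
      split_ifs with h
      · exact key (S, T, e) h.1 h.2
      · intro; exact le_refl 0)
  refine ⟨W, fun S T e hST heT => ?_⟩
  have h1 := hWle (S, T, e)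
  simp only [if_pos (⟨hST, heT⟩ : S ⊆ T ∧ e ∉ T)] at h1
  exact h1
end
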